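/- arXiv:2505.03301 — 2 statements merged into one kernel-verified Lean document; each statement's English description precedes it below -/
import Mathlib

section
/- Let X₁ ⊆ ℝ^{d₁}, X₂ ⊆ ℝ^{d₂} be open sets with 𝓛(X₁) < ∞, p ∈ [1, ∞), m ∈ ℕ*, and g: X₁ → X₂. The following are equivalent: (i) for every f ∈ L^p(X₂, ℝ^m), f ∘ g ∈ L^p(X₁, ℝ^m); (ii) g is Lebesgue-Lebesgue measurable, g_#𝓛 is absolutely continuous with respect to 𝓛, and the Radon–Nikodym derivative of g_#𝓛 with respect to 𝓛 is essentially bounded. -/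
/-!
Both conditions say that the pushforward `ρ = g_#(𝓛|X₁)` satisfies `ρ ≤ C • 𝓛|X₂` for some finite
`C`, with `g` a.e.-measurable: then `∫ ‖f ∘ g‖ᵖ = ∫ ‖f‖ᵖ dρ ≤ C ∫ ‖f‖ᵖ`. Conversely, testing the
composition on indicators shows that `g` is null-measurable and `ρ ≪ 𝓛`, and testing it on
`φ^{1/p} • v` for measurable `φ ≥ 0` shows that `∫ φ dρ < ∞` whenever `∫ φ < ∞`. If no `C` worked,
there would be sets `Aₙ` with `2ⁿ 𝓛(Aₙ) < ρ(Aₙ)`, and `φ = ∑ₙ 1_{Aₙ} / (2ⁿ 𝓛(Aₙ))` would have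
`∫ φ ≤ 2` but `∫ φ dρ = ∞`.
-/

open MeasureTheory Set
open scoped ENNReal

theorem Set.MapsTo.inter_preimage_inter {α β : Type*} {f : α → β} {s : Set α} {t : Set β}
    (hf : MapsTo f s t) (A : Set β) : s ∩ f ⁻¹' (A ∩ t) = s ∩ f ⁻¹' A := by
  rw [preimage_inter, ← inter_assoc, inter_right_comm, inter_eq_left.2 hf.subset_preimage]

namespace MeasureTheory

variable {α β : Type*} [MeasurableSpace α] [MeasurableSpace β] {μ : Measure α} {ν : Measure β}
  {g : α → β}

theorem Measure.exists_le_smul_of_lintegral_lt_top {ρ : Measure β}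
    (h : ∀ φ : β → ℝ≥0∞, Measurable φ → ∫⁻ y, φ y ∂ν < ∞ → ∫⁻ y, φ y ∂ρ < ∞) :
    ∃ C < ∞, ρ ≤ C • ν := by
  by_contra! hcon
  have hbad : ∀ n : ℕ, ∃ A, MeasurableSet A ∧ (2 : ℝ≥0∞) ^ n * ν A < ρ A := fun n => by
    simpa [Measure.le_iff] using hcon (2 ^ n) (ENNReal.pow_lt_top ENNReal.ofNat_lt_top)
  choose A hA hlt using hbad
  set c : ℕ → ℝ≥0∞ := fun n => (2 ^ n * ν (A n))⁻¹
  set φ : β → ℝ≥0∞ := fun y => ∑' n, (A n).indicator (fun _ => c n) y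
  have hφ : Measurable φ := Measurable.tsum fun n => measurable_const.indicator (hA n)
  have hφ_lintegral : ∀ κ : Measure β, ∫⁻ y, φ y ∂κ = ∑' n, c n * κ (A n) := fun κ => by
    rw [lintegral_tsum fun n => (measurable_const.indicator (hA n)).aemeasurable]
    simp only [lintegral_indicator_const (hA _)]
  have hφν : ∫⁻ y, φ y ∂ν < ∞ := by
    have hterm : ∀ n, c n * ν (A n) ≤ 2⁻¹ ^ n := fun n => by
      calc c n * ν (A n) = 2⁻¹ ^ n * ((ν (A n))⁻¹ * ν (A n)) := by
            simp only [c]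
            rw [ENNReal.mul_inv (by simp) (by simp), ENNReal.inv_pow, mul_assoc]
        _ ≤ 2⁻¹ ^ n := mul_le_of_le_one_right' (ENNReal.inv_mul_le_one _)
    calc ∫⁻ y, φ y ∂ν ≤ ∑' n : ℕ, (2⁻¹ : ℝ≥0∞) ^ n := by
          rw [hφ_lintegral]; exact ENNReal.tsum_le_tsum hterm
      _ < ∞ := by simp [ENNReal.tsum_geometric, ENNReal.one_sub_inv_two]
  have hφρ : ∫⁻ y, φ y ∂ρ = ∞ := by
    have hterm : ∀ n, 1 ≤ c n * ρ (A n) := fun n => by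
      rw [mul_comm, ← div_eq_mul_inv,
        ENNReal.le_div_iff_mul_le (Or.inr (hlt n).ne_bot) (Or.inl (hlt n).ne_top), one_mul]
      exact (hlt n).le
    rw [hφ_lintegral]
    refine top_le_iff.1 ?_
    calc ∞ = ∑' _ : ℕ, (1 : ℝ≥0∞) := (ENNReal.tsum_const_eq_top_of_ne_zero one_ne_zero).symm
      _ ≤ _ := ENNReal.tsum_le_tsum hterm
  exact (h φ hφ hφν).ne hφρ

section Composition

variable {E : Type*} [NormedAddCommGroup E] {p : ℝ≥0∞}

theorem measure_preimage_eq_zero_of_ae_eq_comp [Nontrivial E]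
    (H : ∀ f f' : β → E, f =ᵐ[ν] f' → f ∘ g =ᵐ[μ] f' ∘ g) {A : Set β} (hA : ν A = 0) :
    μ (g ⁻¹' A) = 0 := by
  obtain ⟨v, hv⟩ := exists_ne (0 : E)
  have hzero : A.indicator (fun _ => v) =ᵐ[ν] 0 :=
    (measure_eq_zero_iff_ae_notMem.1 hA).mono fun y hy => indicator_of_notMem hy _
  rw [measure_eq_zero_iff_ae_notMem]
  filter_upwards [H _ _ hzero] with x hx hxA
  exact hv (by simpa [indicator_of_mem (mem_preimage.1 hxA)] using hx)

theorem nullMeasurableSet_preimage_of_memLp_comp [Nontrivial E]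
    (H : ∀ f : β → E, MemLp f p ν → MemLp (f ∘ g) p μ) {A : Set β} (hA : MeasurableSet A)
    (hνA : ν A ≠ ∞) : NullMeasurableSet (g ⁻¹' A) μ := by
  obtain ⟨v, hv⟩ := exists_ne (0 : E)
  have : NeZero ‖v‖ := ⟨norm_ne_zero_iff.2 hv⟩
  have hcomp := (H _ (memLp_indicator_const p hA v (Or.inr hνA))).aestronglyMeasurable.norm
  rw [← aemeasurable_indicator_const_iff ‖v‖]
  convert hcomp.aemeasurable using 1
  ext x
  simp only [Function.comp_apply, norm_indicator_eq_indicator_norm]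
  rfl

theorem nullMeasurable_of_memLp_comp [Nontrivial E] [SigmaFinite ν]
    (H : ∀ f : β → E, MemLp f p ν → MemLp (f ∘ g) p μ) : NullMeasurable g μ := by
  intro A hA
  have hA_eq : g ⁻¹' A = ⋃ n, g ⁻¹' (spanningSets ν n ∩ A) := by
    rw [← preimage_iUnion, ← iUnion_inter, iUnion_spanningSets, univ_inter]
  rw [hA_eq]
  refine NullMeasurableSet.iUnion fun n => nullMeasurableSet_preimage_of_memLp_comp H
    ((measurableSet_spanningSets ν n).inter hA) ?_
  exact ((measure_mono inter_subset_left).trans_lt (measure_spanningSets_lt_top ν n)).ne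

theorem lintegral_comp_lt_top_of_memLp_comp [NormedSpace ℝ E] [Nontrivial E] (hp0 : p ≠ 0)
    (hp : p ≠ ∞) (hnull : ∀ A, ν A = 0 → μ (g ⁻¹' A) = 0)
    (H : ∀ f : β → E, MemLp f p ν → MemLp (f ∘ g) p μ) {φ : β → ℝ≥0∞} (hφ : Measurable φ)
    (hφν : ∫⁻ y, φ y ∂ν < ∞) : ∫⁻ x, φ (g x) ∂μ < ∞ := by
  obtain ⟨v, hv⟩ := exists_norm_eq E zero_le_one
  have hp_pos : 0 < p.toReal := ENNReal.toReal_pos hp0 hp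
  set F : β → E := fun y => (φ y ^ p.toReal⁻¹).toReal • v
  have hF_eq : ∀ y, φ y ≠ ∞ → ‖F y‖ₑ ^ p.toReal = φ y := fun y hy => by
    have hv' : ‖v‖ₑ = 1 := by rw [← ofReal_norm, hv, ENNReal.ofReal_one]
    rw [enorm_smul, hv', mul_one, Real.enorm_of_nonneg ENNReal.toReal_nonneg, ENNReal.ofReal_toReal
      (ENNReal.rpow_ne_top_of_nonneg (inv_nonneg.2 hp_pos.le) hy), ENNReal.rpow_inv_rpow hp_pos.ne']
  have hF_le : ∀ y, ‖F y‖ₑ ^ p.toReal ≤ φ y := fun y => by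
    by_cases hy : φ y = ∞
    · exact hy ▸ le_top
    · exact (hF_eq y hy).le
  have hF : MemLp F p ν := by
    refine ⟨(hφ.pow_const _).ennreal_toReal.aestronglyMeasurable.smul_const v, ?_⟩
    rw [eLpNorm_lt_top_iff_lintegral_rpow_enorm_lt_top hp0 hp]
    exact (lintegral_mono hF_le).trans_lt hφν
  have hae : ∀ᵐ x ∂μ, ‖F (g x)‖ₑ ^ p.toReal = φ (g x) := by
    have hfin : μ (g ⁻¹' {y | φ y = ∞}) = 0 :=
      hnull _ (measure_eq_top_of_lintegral_ne_top hφ.aemeasurable hφν.ne)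
    filter_upwards [measure_eq_zero_iff_ae_notMem.1 hfin] with x hx
    exact hF_eq _ hx
  rw [← lintegral_congr_ae hae]
  exact (eLpNorm_lt_top_iff_lintegral_rpow_enorm_lt_top hp0 hp).1 (H F hF).eLpNorm_lt_top

theorem memLp_comp_and_ae_eq_comp_iff [NormedSpace ℝ E] [Nontrivial E] [SigmaFinite ν]
    [MeasurableSpace.CountablyGenerated β] (hp0 : p ≠ 0) (hp : p ≠ ∞) :
    ((∀ f : β → E, MemLp f p ν → MemLp (f ∘ g) p μ) ∧
      (∀ f f' : β → E, f =ᵐ[ν] f' → f ∘ g =ᵐ[μ] f' ∘ g)) ↔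
    AEMeasurable g μ ∧ ∃ C < ∞, μ.map g ≤ C • ν := by
  constructor
  · rintro ⟨hLp, hae⟩
    have hg : AEMeasurable g μ := (nullMeasurable_of_memLp_comp hLp).aemeasurable
    refine ⟨hg, Measure.exists_le_smul_of_lintegral_lt_top fun φ hφ hφν => ?_⟩
    rw [lintegral_map' hφ.aemeasurable hg]
    exact lintegral_comp_lt_top_of_memLp_comp hp0 hp
      (fun _ => measure_preimage_eq_zero_of_ae_eq_comp hae) hLp hφ hφν
  · rintro ⟨hg, C, hC, hle⟩
    exact ⟨fun f hf => (hf.of_measure_le_smul hC.ne hle).comp_of_map hg,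
      fun f f' h => ae_eq_comp' hg h (Measure.absolutelyContinuous_of_le_smul hle)⟩

end Composition

theorem NullMeasurableSet.preimage_of_map_absolutelyContinuous {A : Set β}
    (hA : NullMeasurableSet A ν) (hg : AEMeasurable g μ) (hac : μ.map g ≪ ν) :
    NullMeasurableSet (g ⁻¹' A) μ := by
  obtain ⟨B, hB, hAB⟩ := hA
  exact (hg.nullMeasurable hB).congr (ae_eq_comp' (f := g) hg hAB.symm hac)

theorem measure_preimage_eq_zero_of_map_absolutelyContinuous {A : Set β} (hA : ν A = 0)
    (hg : AEMeasurable g μ) (hac : μ.map g ≪ ν) : μ (g ⁻¹' A) = 0 :=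
  ae_eq_empty.1 (ae_eq_comp' (f := g) hg (ae_eq_empty.2 hA) hac)

theorem aemeasurable_and_exists_map_restrict_le_smul_iff [MeasurableSpace.CountablyGenerated β]
    {s : Set α} {t : Set β} (hs : MeasurableSet s) (ht : MeasurableSet t) (hg : MapsTo g s t) :
    (AEMeasurable g (μ.restrict s) ∧ ∃ C < ∞, (μ.restrict s).map g ≤ C • ν.restrict t) ↔
    ((∀ A ⊆ t, NullMeasurableSet A ν → NullMeasurableSet (s ∩ g ⁻¹' A) μ) ∧
      (∀ A ⊆ t, ν A = 0 → μ (s ∩ g ⁻¹' A) = 0) ∧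
      ∃ C < ∞, ∀ A ⊆ t, MeasurableSet A → μ (s ∩ g ⁻¹' A) ≤ C * ν A) := by
  have hrestrict : ∀ A, μ.restrict s (g ⁻¹' A) = μ (s ∩ g ⁻¹' A) := fun A => by
    rw [Measure.restrict_apply' hs, inter_comm]
  constructor
  · rintro ⟨hg_meas, C, hC, hle⟩
    have hac : (μ.restrict s).map g ≪ ν := (Measure.absolutelyContinuous_of_le_smul hle).trans
      (Measure.absolutelyContinuous_of_le Measure.restrict_le_self)
    refine ⟨fun A _ hA => ?_, fun A _ hA => ?_, C, hC, fun A _ hA => ?_⟩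
    · have := hA.preimage_of_map_absolutelyContinuous hg_meas hac
      rwa [nullMeasurableSet_restrict hs.nullMeasurableSet, inter_comm] at this
    · rw [← hrestrict]
      exact measure_preimage_eq_zero_of_map_absolutelyContinuous hA hg_meas hac
    · calc μ (s ∩ g ⁻¹' A) = (μ.restrict s).map g A := by
            rw [Measure.map_apply_of_aemeasurable hg_meas hA, hrestrict]
        _ ≤ C * ν.restrict t A := Measure.le_iff'.1 hle A
        _ ≤ C * ν A := mul_le_mul_right (Measure.restrict_apply_le _ _) C
  · rintro ⟨hnull_meas, -, C, hC, hbound⟩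
    have hg_nm : NullMeasurable g (μ.restrict s) := fun B hB => by
      rw [nullMeasurableSet_restrict hs.nullMeasurableSet, inter_comm, ← hg.inter_preimage_inter]
      exact hnull_meas _ inter_subset_right (hB.inter ht).nullMeasurableSet
    refine ⟨hg_nm.aemeasurable, C, hC, Measure.le_iff.2 fun B hB => ?_⟩
    rw [Measure.map_apply_of_aemeasurable hg_nm.aemeasurable hB, hrestrict,
      ← hg.inter_preimage_inter, Measure.smul_apply, smul_eq_mul, Measure.restrict_apply hB]
    exact hbound _ inter_subset_right (hB.inter ht)

end MeasureTheory

theorem stmt_6_general {d₁ d₂ m : ℕ} (hm : 0 < m) (p : ℝ≥0∞) (hp : 1 ≤ p) (hp' : p ≠ ⊤)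
    (X₁ : Set (Fin d₁ → ℝ)) (X₂ : Set (Fin d₂ → ℝ)) (hX₁ : IsOpen X₁) (hX₂ : IsOpen X₂)
    (g : (Fin d₁ → ℝ) → (Fin d₂ → ℝ)) (hg : Set.MapsTo g X₁ X₂) :
    ((∀ f : (Fin d₂ → ℝ) → (Fin m → ℝ), MemLp f p (volume.restrict X₂) →
        MemLp (f ∘ g) p (volume.restrict X₁)) ∧
     (∀ f f' : (Fin d₂ → ℝ) → (Fin m → ℝ), f =ᵐ[volume.restrict X₂] f' →
        f ∘ g =ᵐ[volume.restrict X₁] f' ∘ g)) ↔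
    ((∀ A : Set (Fin d₂ → ℝ), A ⊆ X₂ → NullMeasurableSet A volume →
        NullMeasurableSet (X₁ ∩ g ⁻¹' A) volume) ∧
     (∀ A : Set (Fin d₂ → ℝ), A ⊆ X₂ → volume A = 0 → volume (X₁ ∩ g ⁻¹' A) = 0) ∧
     (∃ C : ℝ≥0∞, C < ⊤ ∧ ∀ A : Set (Fin d₂ → ℝ), A ⊆ X₂ → MeasurableSet A →
        volume (X₁ ∩ g ⁻¹' A) ≤ C * volume A)) := by
  have : Nonempty (Fin m) := ⟨⟨0, hm⟩⟩
  rw [memLp_comp_and_ae_eq_comp_iff (zero_lt_one.trans_le hp).ne' hp']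
  exact aemeasurable_and_exists_map_restrict_le_smul_iff hX₁.measurableSet hX₂.measurableSet hg

/-- Let `X₁ ⊆ ℝ^{d₁}`, `X₂ ⊆ ℝ^{d₂}` be open with `𝓛(X₁) < ∞`, `p ∈ [1, ∞)`, `m ≥ 1`, and
`g : X₁ → X₂`. The following are equivalent:
(i) for every `f ∈ L^p(X₂, ℝ^m)`, `f ∘ g ∈ L^p(X₁, ℝ^m)` (composition with `g` respecting
a.e. equivalence classes);
(ii) `g` is (𝔏, 𝔏)-measurable, the pushforward `g_#𝓛` is absolutely continuous with respect to
the Lebesgue measure `𝓛`, and the Radon–Nikodym derivative of `g_#𝓛` with respect to `𝓛` is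
(essentially) bounded, i.e. there is a finite constant `C` with `g_#𝓛(A) ≤ C·𝓛(A)` for every
measurable `A`. -/
theorem stmt_6 {d₁ d₂ m : ℕ} (hm : 0 < m) (p : ℝ≥0∞) (hp : 1 ≤ p) (hp' : p ≠ ⊤)
    (X₁ : Set (Fin d₁ → ℝ)) (X₂ : Set (Fin d₂ → ℝ)) (hX₁ : IsOpen X₁) (hX₂ : IsOpen X₂)
    (hfin : volume X₁ < ⊤)
    (g : (Fin d₁ → ℝ) → (Fin d₂ → ℝ)) (hg : Set.MapsTo g X₁ X₂) :
    ((∀ f : (Fin d₂ → ℝ) → (Fin m → ℝ), MemLp f p (volume.restrict X₂) →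
        MemLp (f ∘ g) p (volume.restrict X₁)) ∧
     (∀ f f' : (Fin d₂ → ℝ) → (Fin m → ℝ), f =ᵐ[volume.restrict X₂] f' →
        f ∘ g =ᵐ[volume.restrict X₁] f' ∘ g)) ↔
    ((∀ A : Set (Fin d₂ → ℝ), A ⊆ X₂ → NullMeasurableSet A volume →
        NullMeasurableSet (X₁ ∩ g ⁻¹' A) volume) ∧
     (∀ A : Set (Fin d₂ → ℝ), A ⊆ X₂ → volume A = 0 → volume (X₁ ∩ g ⁻¹' A) = 0) ∧
     (∃ C : ℝ≥0∞, C < ⊤ ∧ ∀ A : Set (Fin d₂ → ℝ), A ⊆ X₂ → MeasurableSet A →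
        volume (X₁ ∩ g ⁻¹' A) ≤ C * volume A)) :=
  stmt_6_general hm p hp hp' X₁ X₂ hX₁ hX₂ g hg
end

section
/- Let A be a real d×d matrix, τ a delay function with inf_{s∈[0,t]} τ(s) > 0 for all t ≥ 0, and x₀: [−h(0), 0) → ℝ^d any function, where h(0) = −inf_{s≥0}(s − τ(s)). Then there exists a unique function x: [−h(0), ∞) → ℝ^d which restricts to x₀ on [−h(0), 0) and satisfies x(t) = A·x(t − τ(t)) for every t ≥ 0; it is given by x(t) = A^{n(t)}·x₀(σ_{n(t)}(t)) for t ≥ 0. -/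
open Set

/-- The sets `Dₙ` on which the `n`-th iterated delay function is defined:
`D₀ = ℝ`, `Dₙ = {t ∈ ℝ₊ : t − τ(t) ∈ Dₙ₋₁}`. -/
def Dset (τ : ℝ → ℝ) : ℕ → Set ℝ
  | 0 => Set.univ
  | n + 1 => {t : ℝ | 0 ≤ t ∧ t - τ t ∈ Dset τ n}

/-- The iterated delay functions: `σ₀ = id`, `σₙ(t) = σₙ₋₁(t − τ(t))`. -/
def iterDelay (τ : ℝ → ℝ) : ℕ → ℝ → ℝ
  | 0 => fun t => t
  | n + 1 => fun t => iterDelay τ n (t - τ t)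

/-- `t` belongs to the interval `[−h(0), 0)`, where `h(0) = −inf_{s ≥ 0}(s − τ(s))`:
`t < 0` and `t` is above every lower bound of `{s − τ(s) : s ≥ 0}` (so that when
`h(0) = +∞` this covers all negative reals). -/
def InNegDom (τ : ℝ → ℝ) (t : ℝ) : Prop :=
  t < 0 ∧ ∀ m : ℝ, (∀ s : ℝ, 0 ≤ s → m ≤ s - τ s) → m ≤ t

/-! For `t ≥ 0` we have `n(t) = n(t − τ(t)) + 1`, and `n = 0` on the negative reals. So the
recursion `x(t) = f(x(t − τ(t)))` reaches `[−h(0), 0)` after exactly `n(t)` steps, at the point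
`σ_{n(t)}(t)`: this gives the explicit solution `fⁿ⁽ᵗ⁾(x₀(σ_{n(t)}(t)))`, and strong induction
on `n(t)` gives uniqueness. -/

theorem Matrix.pow_mulVec_eq_iterate {ι R : Type*} [Fintype ι] [DecidableEq ι] [Semiring R]
    (A : Matrix ι ι R) (k : ℕ) (v : ι → R) : (A ^ k).mulVec v = A.mulVec^[k] v := by
  induction k generalizing v with
  | zero => simp
  | succ k ih => rw [pow_succ, ← Matrix.mulVec_mulVec, ih, Function.iterate_succ_apply]

theorem Antitone.eq_of_mem_of_notMem_succ {α : Type*} {S : ℕ → Set α} (hS : Antitone S)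
    {a : α} {m k : ℕ} (hm : a ∈ S m) (hm' : a ∉ S (m + 1)) (hk : a ∈ S k)
    (hk' : a ∉ S (k + 1)) : m = k :=
  le_antisymm (not_lt.1 fun h => hk' (hS h hm)) (not_lt.1 fun h => hm' (hS h hk))

theorem Dset.succ_subset (τ : ℝ → ℝ) : ∀ n, Dset τ (n + 1) ⊆ Dset τ n
  | 0 => subset_univ _
  | n + 1 => fun _ ht => ⟨ht.1, Dset.succ_subset τ n ht.2⟩

theorem Dset.antitone (τ : ℝ → ℝ) : Antitone (Dset τ) :=
  antitone_nat_of_succ_le (Dset.succ_subset τ)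

theorem inNegDom_sub_delay {τ : ℝ → ℝ} {t : ℝ} (ht : 0 ≤ t) (h : t - τ t < 0) :
    InNegDom τ (t - τ t) :=
  ⟨h, fun _ hm => hm t ht⟩

def IsDelaySolution {V : Type*} (f : V → V) (τ : ℝ → ℝ) (x₀ y : ℝ → V) : Prop :=
  (∀ t, InNegDom τ t → y t = x₀ t) ∧ ∀ t, 0 ≤ t → y t = f (y (t - τ t))

noncomputable def delaySolution {V : Type*} (f : V → V) (τ : ℝ → ℝ) (nfun : ℝ → ℕ)
    (x₀ : ℝ → V) (t : ℝ) : V :=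
  if 0 ≤ t then f^[nfun t] (x₀ (iterDelay τ (nfun t) t)) else x₀ t

theorem delaySolution_of_nonneg {V : Type*} (f : V → V) (τ : ℝ → ℝ) (nfun : ℝ → ℕ)
    (x₀ : ℝ → V) {t : ℝ} (ht : 0 ≤ t) :
    delaySolution f τ nfun x₀ t = f^[nfun t] (x₀ (iterDelay τ (nfun t) t)) :=
  if_pos ht

section DelayIndex

variable {V : Type*} {f : V → V} {τ : ℝ → ℝ} {nfun : ℝ → ℕ} {t : ℝ}
  (hn : ∀ t : ℝ, t ∈ Dset τ (nfun t) ∧ t ∉ Dset τ (nfun t + 1))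
include hn

theorem nfun_eq_of_mem {k : ℕ} (hk : t ∈ Dset τ k) (hk' : t ∉ Dset τ (k + 1)) : nfun t = k :=
  (Dset.antitone τ).eq_of_mem_of_notMem_succ (hn t).1 (hn t).2 hk hk'

theorem nfun_eq_nfun_sub_delay_add_one (ht : 0 ≤ t) : nfun t = nfun (t - τ t) + 1 :=
  nfun_eq_of_mem hn ⟨ht, (hn _).1⟩ fun h => (hn _).2 h.2

theorem nfun_eq_one (ht : 0 ≤ t) (ht' : t - τ t < 0) : nfun t = 1 :=
  nfun_eq_of_mem hn ⟨ht, trivial⟩ fun h => ht'.not_ge h.2.1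

theorem isDelaySolution_delaySolution (x₀ : ℝ → V) :
    IsDelaySolution f τ x₀ (delaySolution f τ nfun x₀) := by
  refine ⟨fun t ht => if_neg ht.1.not_ge, fun t ht => ?_⟩
  rw [delaySolution, if_pos ht]
  rcases le_or_gt 0 (t - τ t) with hpos | hneg
  · rw [delaySolution, if_pos hpos, nfun_eq_nfun_sub_delay_add_one hn ht,
      Function.iterate_succ_apply']
    rfl
  · rw [delaySolution, if_neg hneg.not_ge, nfun_eq_one hn ht hneg]
    rfl

theorem IsDelaySolution.eq_of_nonneg {x₀ y z : ℝ → V} (hy : IsDelaySolution f τ x₀ y)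
    (hz : IsDelaySolution f τ x₀ z) (ht : 0 ≤ t) : y t = z t := by
  induction hk : nfun t using Nat.strong_induction_on generalizing t with
  | _ k ih =>
    rw [hy.2 t ht, hz.2 t ht]
    rcases le_or_gt 0 (t - τ t) with hpos | hneg
    · have hlt : nfun (t - τ t) < k := by
        rw [← hk, nfun_eq_nfun_sub_delay_add_one hn ht]
        exact Nat.lt_succ_self _
      rw [ih _ hlt hpos rfl]
    · have hdom := inNegDom_sub_delay ht hneg
      rw [hy.1 _ hdom, hz.1 _ hdom]

end DelayIndex

theorem stmt_14_general {d : ℕ} (A : Matrix (Fin d) (Fin d) ℝ) (τ : ℝ → ℝ)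
    (nfun : ℝ → ℕ) (hn : ∀ t : ℝ, t ∈ Dset τ (nfun t) ∧ t ∉ Dset τ (nfun t + 1))
    (x₀ : ℝ → Fin d → ℝ) :
    ∃ x : ℝ → Fin d → ℝ,
      ((∀ t : ℝ, InNegDom τ t → x t = x₀ t) ∧
       (∀ t : ℝ, 0 ≤ t → x t = A.mulVec (x (t - τ t))) ∧
       (∀ t : ℝ, 0 ≤ t → x t = (A ^ nfun t).mulVec (x₀ (iterDelay τ (nfun t) t)))) ∧
      ∀ y : ℝ → Fin d → ℝ,
        ((∀ t : ℝ, InNegDom τ t → y t = x₀ t) ∧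
         (∀ t : ℝ, 0 ≤ t → y t = A.mulVec (y (t - τ t)))) →
        ∀ t : ℝ, (0 ≤ t ∨ InNegDom τ t) → y t = x t := by
  have hx := isDelaySolution_delaySolution (f := A.mulVec) hn x₀
  refine ⟨delaySolution A.mulVec τ nfun x₀, ⟨hx.1, hx.2, fun t ht => ?_⟩, fun y hy t ht => ?_⟩
  · rw [delaySolution_of_nonneg _ _ _ _ ht, Matrix.pow_mulVec_eq_iterate]
  · rcases ht with ht | ht
    · exact IsDelaySolution.eq_of_nonneg hn hy hx ht
    · rw [hy.1 t ht, hx.1 t ht]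

/-- Existence and uniqueness of solutions: for every initial condition
`x₀ : [−h(0), 0) → ℝ^d` there is a function `x : [−h(0), ∞) → ℝ^d` restricting to `x₀` on
`[−h(0), 0)` and satisfying `x(t) = A·x(t − τ(t))` for all `t ≥ 0`; it is given by
`x(t) = A^{n(t)}·x₀(σ_{n(t)}(t))` for `t ≥ 0`, and it is unique on `[−h(0), ∞)`. -/
theorem stmt_14 {d : ℕ} (A : Matrix (Fin d) (Fin d) ℝ) (τ : ℝ → ℝ)
    (hτ : ∀ t : ℝ, 0 ≤ t → 0 < τ t)
    (hinf : ∀ t : ℝ, 0 ≤ t → ∃ δ > (0 : ℝ), ∀ s ∈ Set.Icc (0 : ℝ) t, δ ≤ τ s)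
    (nfun : ℝ → ℕ) (hn : ∀ t : ℝ, t ∈ Dset τ (nfun t) ∧ t ∉ Dset τ (nfun t + 1))
    (x₀ : ℝ → Fin d → ℝ) :
    ∃ x : ℝ → Fin d → ℝ,
      ((∀ t : ℝ, InNegDom τ t → x t = x₀ t) ∧
       (∀ t : ℝ, 0 ≤ t → x t = A.mulVec (x (t - τ t))) ∧
       (∀ t : ℝ, 0 ≤ t → x t = (A ^ nfun t).mulVec (x₀ (iterDelay τ (nfun t) t)))) ∧
      ∀ y : ℝ → Fin d → ℝ,
        ((∀ t : ℝ, InNegDom τ t → y t = x₀ t) ∧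
         (∀ t : ℝ, 0 ≤ t → y t = A.mulVec (y (t - τ t)))) →
        ∀ t : ℝ, (0 ≤ t ∨ InNegDom τ t) → y t = x t :=
  stmt_14_general A τ nfun hn x₀
end
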